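/- Let T : H → H be nonexpansive on a real Hilbert space and z⋆ a fixed point of T. For the averaged iteration z^{k+1} = (T z^k + z^k)/2, one has the summability estimate ∑_{k=0}^{∞} ‖T z^k - z^k‖² ≤ 4 ‖z^0 - z⋆‖², and in particular ‖T z^k - z^k‖ → 0. -/

import Mathlib

/-!
With `S = (T + I)/2`, the parallelogram law applied to `T x - z⋆` and `x - z⋆` gives
`‖T x - x‖² ≤ 4‖x - z⋆‖² - 4‖S x - z⋆‖²`. Along the iteration the right-hand sides telescope,
so the partial sums of the squared residuals are bounded by `4‖z⁰ - z⋆‖²`; the residuals are then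
square-summable and hence tend to `0`.
-/

open Filter Topology Finset

theorem norm_sub_sq_le_of_norm_sub_le {H : Type*} [NormedAddCommGroup H] [InnerProductSpace ℝ H]
    {u v p : H} (h : ‖u - p‖ ≤ ‖v - p‖) :
    ‖u - v‖ ^ 2 ≤ 4 * ‖v - p‖ ^ 2 - 4 * ‖(2 : ℝ)⁻¹ • (u + v) - p‖ ^ 2 := by
  have hmid : (2 : ℝ)⁻¹ • (u + v) - p = (2 : ℝ)⁻¹ • ((u - p) + (v - p)) := by module
  have hpar := parallelogram_law_with_norm ℝ (u - p) (v - p)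
  rw [sub_sub_sub_cancel_right] at hpar
  rw [hmid, norm_smul, Real.norm_of_nonneg (by norm_num)]
  nlinarith [norm_nonneg (u - p), norm_nonneg (v - p)]

theorem sum_range_le_of_le_sub_succ {d V : ℕ → ℝ} (hd : ∀ k, d k ≤ V k - V (k + 1))
    (hV : ∀ k, 0 ≤ V k) (N : ℕ) : ∑ k ∈ range N, d k ≤ V 0 :=
  calc ∑ k ∈ range N, d k ≤ ∑ k ∈ range N, (V k - V (k + 1)) := sum_le_sum fun k _ => hd k
    _ = V 0 - V N := sum_range_sub' V N
    _ ≤ V 0 := sub_le_self _ (hV N)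

theorem tendsto_norm_zero_of_summable_sq {E : Type*} [SeminormedAddCommGroup E] {v : ℕ → E}
    (h : Summable fun k => ‖v k‖ ^ 2) : Tendsto (fun k => ‖v k‖) atTop (𝓝 0) := by
  have hsqrt := (Real.continuous_sqrt.tendsto 0).comp h.tendsto_atTop_zero
  simpa only [Function.comp_def, Real.sqrt_sq (norm_nonneg _), Real.sqrt_zero] using hsqrt

/-- For the averaged iteration of a nonexpansive map with a fixed point `z⋆`,
the residuals are square-summable with `∑ ‖T z^k - z^k‖² ≤ 4‖z^0 - z⋆‖²`, and in
particular the residuals tend to `0`. -/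
theorem km_iteration_residual_summability
    {H : Type*} [NormedAddCommGroup H] [InnerProductSpace ℝ H]
    (T : H → H) (hT : ∀ x y : H, ‖T x - T y‖ ≤ ‖x - y‖)
    (zs : H) (hzs : T zs = zs)
    (z : ℕ → H) (hz : ∀ k, z (k + 1) = (2 : ℝ)⁻¹ • (T (z k) + z k)) :
    (∀ N : ℕ, ∑ k ∈ Finset.range N, ‖T (z k) - z k‖ ^ 2 ≤ 4 * ‖z 0 - zs‖ ^ 2) ∧
    Filter.Tendsto (fun k => ‖T (z k) - z k‖) Filter.atTop (nhds 0) := by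
  have hstep (k : ℕ) :
      ‖T (z k) - z k‖ ^ 2 ≤ 4 * ‖z k - zs‖ ^ 2 - 4 * ‖z (k + 1) - zs‖ ^ 2 := by
    rw [hz k]
    exact norm_sub_sq_le_of_norm_sub_le (by simpa only [hzs] using hT (z k) zs)
  have hsum := sum_range_le_of_le_sub_succ hstep fun k => by positivity
  exact ⟨hsum, tendsto_norm_zero_of_summable_sq <|
    summable_of_sum_range_le (fun _ => by positivity) hsum⟩
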